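/- Let g, r, d, s, e be positive integers with d ≤ g − 1, e ≤ g − 1, r ≠ s, and ρ(g,r,d) = ρ(g,s,e) = −1. Then γ(r,d) ≠ γ(s,e), and if γ(r,d) < γ(s,e) then κ(g,r,d) > κ(g,s,e). -/

import Mathlib

noncomputable section

/-- The Brill--Noether number `ρ(g,r,d) = g - (r+1)(g-d+r)`. -/
def rho (g r d : ℤ) : ℤ := g - (r + 1) * (g - d + r)

/-- Pflueger's Brill--Noether number `ρ_k(g,r,d)`, the maximum of
`ρ(g,r-ℓ,d) - ℓk` over integers `0 ≤ ℓ ≤ min r (g-d+r-1)`. -/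
def rhoK (g r d k : ℤ) : ℤ :=
  sSup ((fun ℓ : ℤ => rho g (r - ℓ) d - ℓ * k) '' Set.Icc 0 (min r (g - d + r - 1)))

/-- `κ(g,r,d)`: the greatest integer `k ≥ 1` such that `ρ_k(g,r,d) ≥ 0`. -/
def kappa (g r d : ℤ) : ℤ := sSup {k : ℤ | 1 ≤ k ∧ 0 ≤ rhoK g r d k}

/-- `d_max(g,r) = r + ⌈gr/(r+1)⌉ - 1`, the largest `d` with `ρ(g,r,d) < 0`. -/
def dmax (g r : ℤ) : ℤ := r + ⌈((g : ℚ) * r) / ((r : ℚ) + 1)⌉ - 1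

/-!
Write `m = g - d + r` and `n = g - e + s`. The condition `ρ(g,r,d) = -1` says `(r+1) m = g + 1`,
and then `ρ(g,r-ℓ,d) - ℓk = -1 + ℓ(r + 1 + m - ℓ - k)`, so `ρ_k(g,r,d) ≥ 0` exactly when
`k < r + m` (take `ℓ = 1`); hence `κ(g,r,d) = r + m - 1`. Since `γ(r,d) = g - (r + m)`, comparing
the `γ`s is comparing the `κ`s. Finally `γ(r,d) = γ(s,e)` would make `{r+1, m}` and `{s+1, n}` two
pairs with the same sum and product, hence equal; as `r ≠ s` this forces `m = s + 1`, `n = r + 1`,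
which contradicts `m ≥ r + 1`, `n ≥ s + 1` (i.e. `d, e ≤ g - 1`).
-/

lemma rho_sub_sub_mul (g r d ℓ k : ℤ) :
    rho g (r - ℓ) d - ℓ * k = rho g r d + ℓ * (r + 1 + (g - d + r) - ℓ - k) := by
  unfold rho
  ring

lemma le_rhoK {g r d ℓ : ℤ} (k : ℤ) (hℓ : ℓ ∈ Set.Icc 0 (min r (g - d + r - 1))) :
    rho g (r - ℓ) d - ℓ * k ≤ rhoK g r d k :=
  le_csSup ((Set.finite_Icc _ _).image _).bddAbove (Set.mem_image_of_mem _ hℓ)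

lemma rhoK_le {g r d k c : ℤ} (h0 : 0 ≤ min r (g - d + r - 1))
    (h : ∀ ℓ ∈ Set.Icc 0 (min r (g - d + r - 1)), rho g (r - ℓ) d - ℓ * k ≤ c) :
    rhoK g r d k ≤ c :=
  csSup_le ((Set.nonempty_Icc.mpr h0).image _) (Set.forall_mem_image.mpr h)

section RhoEqNegOne

variable {g r d : ℤ} (hr : 1 ≤ r) (hdg : d ≤ g - 1) (hρ : rho g r d = -1)
include hr hdg hρ

lemma rhoK_nonneg_iff (k : ℤ) : 0 ≤ rhoK g r d k ↔ k < r + (g - d + r) := by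
  have hmin : min r (g - d + r - 1) = r := min_eq_left (by omega)
  constructor
  · intro h
    by_contra! hk
    have : rhoK g r d k ≤ -1 := rhoK_le (by omega) fun ℓ hℓ => by
      rw [hmin] at hℓ
      rw [rho_sub_sub_mul, hρ]
      rcases hℓ.1.eq_or_lt with rfl | hℓ0
      · simp
      · nlinarith
    omega
  · intro hk
    have := le_rhoK (ℓ := 1) k (by rw [hmin]; constructor <;> omega)
    rw [rho_sub_sub_mul, hρ] at this
    omega

lemma kappa_eq_of_rho_eq_neg_one : kappa g r d = r + (g - d + r) - 1 := by
  have hset : {k : ℤ | 1 ≤ k ∧ 0 ≤ rhoK g r d k} = Set.Icc 1 (r + (g - d + r) - 1) := by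
    ext k
    simp only [Set.mem_ofPred_eq, Set.mem_Icc, rhoK_nonneg_iff hr hdg hρ]
    omega
  rw [kappa, hset, csSup_Icc (by omega)]

end RhoEqNegOne

theorem stmt16_general (g r d s e : ℤ) (hr : 1 ≤ r)
    (hs : 1 ≤ s) (hdg : d ≤ g - 1) (heg : e ≤ g - 1) (hrs : r ≠ s)
    (h1 : rho g r d = -1) (h2 : rho g s e = -1) :
    d - 2 * r ≠ e - 2 * s ∧ (d - 2 * r < e - 2 * s → kappa g s e < kappa g r d) := by
  rw [kappa_eq_of_rho_eq_neg_one hr hdg h1, kappa_eq_of_rho_eq_neg_one hs heg h2]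
  refine ⟨fun hγ => ?_, fun _ => by omega⟩
  have hrm : (r + 1) * (g - d + r) = g + 1 := by unfold rho at h1; linarith
  have hsn : (s + 1) * (g - e + s) = g + 1 := by unfold rho at h2; linarith
  have hn : g - e + s = r + (g - d + r) - s := by omega
  rw [hn] at hsn
  have hpair : (r - s) * (g - d + r - (s + 1)) = 0 := by linear_combination hrm - hsn
  rcases mul_eq_zero.mp hpair with h | h <;> omega

theorem stmt16 (g r d s e : ℤ) (hg : 1 ≤ g) (hr : 1 ≤ r) (hd : 1 ≤ d)
    (hs : 1 ≤ s) (he : 1 ≤ e) (hdg : d ≤ g - 1) (heg : e ≤ g - 1) (hrs : r ≠ s)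
    (h1 : rho g r d = -1) (h2 : rho g s e = -1) :
    d - 2 * r ≠ e - 2 * s ∧ (d - 2 * r < e - 2 * s → kappa g s e < kappa g r d) :=
  stmt16_general g r d s e hr hs hdg heg hrs h1 h2
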